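/- For every natural number N, every real number k, and every real x with −1 ≤ x ≤ 1, the Fourier–Legendre series of I_N(k·) converges to the function value: ∑_{L=0}^∞ b_{LN}(k) · P_L(x) = I_N(kx), where b_{LN}(k) = ((2L+1)/2) ∫_{−1}^{1} I_N(kt) P_L(t) dt. -/

import Mathlib

open Real

/-- Modified Bessel function of the first kind of integer order `N`, defined by
its everywhere-convergent power series. -/
noncomputable def besselI (N : ℕ) (x : ℝ) : ℝ :=
  ∑' m : ℕ, (x / 2) ^ (2 * m + N) / ((m.factorial : ℝ) * ((m + N).factorial : ℝ))

/-- Legendre polynomial of degree `L` via Rodrigues' formula. -/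
noncomputable def legendreP (L : ℕ) : Polynomial ℝ :=
  Polynomial.C (1 / ((2 : ℝ) ^ L * (L.factorial : ℝ))) *
    (⇑Polynomial.derivative)^[L] ((Polynomial.X ^ 2 - 1) ^ L)

/-- The Fourier–Legendre coefficient `b_{LN}(k)` of `I_N(k·)`. -/
noncomputable def fourierLegendreCoeffI (L N : ℕ) (k : ℝ) : ℝ :=
  ((2 * (L : ℝ) + 1) / 2) * ∫ t in (-1:ℝ)..1, besselI N (k * t) * (legendreP L).eval t

open Polynomial MeasureTheory

/-!
Write `I_N(kx) = ∑ₘ cₘ x^(2m+N)`. By Rodrigues' formula and repeated integration by parts the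
`P_L` are orthogonal on `[-1, 1]` with `∫ P_L² = 2/(2L+1)`, so every monomial `xⁿ` equals its own
finite Fourier–Legendre series `∑_{L ≤ n} a_{L,n} P_L(x)`. This turns `I_N(kx)` into the double
series `∑ₘ ∑_L cₘ a_{L,2m+N} P_L(x)`. The crude bounds `|P_L| ≤ 8^L` on `[-1, 1]` and
`|a_{L,n}| ≤ (2L+1) 8^L` are beaten by the factorial decay of `cₘ`, so the double series is
absolutely summable and may be summed over `m` first; termwise integration of the power series
identifies the inner sum with `b_{LN}(k) P_L(x)`.
-/

section IntegrationByParts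

variable (a b : ℝ)

theorem Polynomial.intervalIntegrable_eval_mul_eval (p q : ℝ[X]) :
    IntervalIntegrable (fun t => p.eval t * q.eval t) volume a b :=
  (p.continuous.mul q.continuous).intervalIntegrable a b

theorem Polynomial.integral_eval_derivative_mul (p q : ℝ[X]) :
    ∫ t in a..b, (derivative p).eval t * q.eval t
      = p.eval b * q.eval b - p.eval a * q.eval a
        - ∫ t in a..b, p.eval t * (derivative q).eval t := by
  rw [eq_sub_iff_add_eq, ← intervalIntegral.integral_add
    (intervalIntegrable_eval_mul_eval a b _ _) (intervalIntegrable_eval_mul_eval a b _ _)]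
  exact intervalIntegral.integral_deriv_mul_eq_sub (fun x _ => p.hasDerivAt x)
    (fun x _ => q.hasDerivAt x) ((derivative p).continuous.intervalIntegrable a b)
    ((derivative q).continuous.intervalIntegrable a b)

end IntegrationByParts

theorem Summable.hasSum_prod_fiberwise_comm {α β γ : Type*} [AddCommMonoid α] [TopologicalSpace α]
    [ContinuousAdd α] [T3Space α] {f : β × γ → α} {u : β → α} {v : γ → α} {a : α}
    (hf : Summable f) (hu : HasSum u a) (hfu : ∀ b, HasSum (fun c => f (b, c)) (u b))
    (hfv : ∀ c, HasSum (fun b => f (b, c)) (v c)) : HasSum v a := by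
  have hfa : HasSum f a := (hf.hasSum.prod_fiberwise hfu).unique hu ▸ hf.hasSum
  exact ((Equiv.prodComm γ β).hasSum_iff.mpr hfa).prod_fiberwise hfv

noncomputable def rodriguesPoly (L : ℕ) : ℝ[X] := (X ^ 2 - 1) ^ L

theorem legendreP_eq (L : ℕ) :
    legendreP L = C (1 / (2 ^ L * L.factorial : ℝ)) * derivative^[L] (rodriguesPoly L) := rfl

theorem isRoot_iterate_derivative_rodriguesPoly {L j : ℕ} (hj : j < L) {c : ℝ} (hc : c ^ 2 = 1) :
    (derivative^[j] (rodriguesPoly L)).IsRoot c := by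
  obtain ⟨q, hq⟩ := pow_sub_dvd_iterate_derivative_pow (X ^ 2 - 1 : ℝ[X]) L j
  simp [rodriguesPoly, hq, hc, Nat.sub_ne_zero_of_lt hj]

theorem integral_iterate_derivative_rodriguesPoly_mul (L : ℕ) (q : ℝ[X]) {j : ℕ} (hj : j ≤ L) :
    ∫ t in (-1)..1, (derivative^[L] (rodriguesPoly L)).eval t * q.eval t
      = (-1) ^ j * ∫ t in (-1)..1,
          (derivative^[L - j] (rodriguesPoly L)).eval t * (derivative^[j] q).eval t := by
  induction j with
  | zero => simp
  | succ j ih =>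
    have hsucc : L - j = L - (j + 1) + 1 := by omega
    rw [ih (by omega), hsucc, Function.iterate_succ_apply', integral_eval_derivative_mul,
      (isRoot_iterate_derivative_rodriguesPoly (by omega) (by norm_num : (1 : ℝ) ^ 2 = 1)).eq_zero,
      (isRoot_iterate_derivative_rodriguesPoly (by omega) (by norm_num : (-1 : ℝ) ^ 2 = 1)).eq_zero,
      ← Function.iterate_succ_apply' derivative j q]
    ring

theorem integral_eval_mul_legendreP_eq_zero {q : ℝ[X]} {L : ℕ} (hq : q.natDegree < L) :
    ∫ t in (-1)..1, q.eval t * (legendreP L).eval t = 0 := by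
  simp_rw [legendreP_eq, eval_mul, eval_C, mul_left_comm (q.eval _), mul_comm (q.eval _)]
  rw [intervalIntegral.integral_const_mul, integral_iterate_derivative_rodriguesPoly_mul L q le_rfl,
    iterate_derivative_eq_zero hq]
  simp

theorem derivative_X_mul_rodriguesPoly_succ (L : ℕ) :
    derivative (X * rodriguesPoly (L + 1))
      = C (2 * (L : ℝ) + 3) * rodriguesPoly (L + 1) + C (2 * (L : ℝ) + 2) * rodriguesPoly L := by
  rw [rodriguesPoly, rodriguesPoly, derivative_mul, derivative_X, derivative_pow,
    Nat.add_sub_cancel, pow_succ _ L]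
  simp only [derivative_sub, derivative_X_pow, derivative_one, map_add, map_mul, map_natCast,
    map_ofNat]
  push_cast
  ring

theorem integral_eval_rodriguesPoly_succ (L : ℕ) :
    (2 * L + 3) * ∫ t in (-1)..1, (rodriguesPoly (L + 1)).eval t
      = -(2 * L + 2) * ∫ t in (-1)..1, (rodriguesPoly L).eval t := by
  have h := integral_eval_derivative_mul (-1) 1 (X * rodriguesPoly (L + 1)) 1
  rw [derivative_X_mul_rodriguesPoly_succ] at h
  simp only [eval_add, eval_mul, eval_C, eval_one, derivative_one, eval_zero, mul_one, mul_zero,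
    intervalIntegral.integral_zero, sub_zero] at h
  rw [intervalIntegral.integral_add, intervalIntegral.integral_const_mul,
    intervalIntegral.integral_const_mul] at h
  · norm_num [rodriguesPoly] at h ⊢
    linarith
  all_goals exact (Continuous.intervalIntegrable (by fun_prop) _ _)

theorem integral_eval_rodriguesPoly (L : ℕ) :
    ∫ t in (-1)..1, (rodriguesPoly L).eval t
      = (-1) ^ L * 2 ^ (2 * L + 1) * L.factorial ^ 2 / (2 * L + 1).factorial := by
  induction L with
  | zero => norm_num [rodriguesPoly]
  | succ L ih =>
    have h2L : (2 * (L + 1) + 1).factorial = (2 * L + 3) * (2 * L + 2) * (2 * L + 1).factorial := by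
      rw [show 2 * (L + 1) + 1 = 2 * L + 1 + 1 + 1 by ring, Nat.factorial_succ, Nat.factorial_succ]
      ring
    rw [← mul_right_inj' (by positivity : (2 * L + 3 : ℝ) ≠ 0), integral_eval_rodriguesPoly_succ,
      ih, h2L, Nat.factorial_succ L]
    push_cast
    field_simp
    ring

theorem monic_rodriguesPoly (L : ℕ) : (rodriguesPoly L).Monic := by
  have : (X ^ 2 - 1 : ℝ[X]).Monic := by simpa using monic_X_pow_sub_C (1 : ℝ) two_ne_zero
  exact this.pow L

theorem natDegree_rodriguesPoly (L : ℕ) : (rodriguesPoly L).natDegree = 2 * L := by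
  have : (X ^ 2 - 1 : ℝ[X]).natDegree = 2 := by
    simpa using natDegree_X_pow_sub_C (n := 2) (r := (1 : ℝ))
  rw [rodriguesPoly, natDegree_pow, this, mul_comm]

theorem coeff_legendreP_self (L : ℕ) :
    (legendreP L).coeff L = (2 * L).choose L / 2 ^ L := by
  have hW : (rodriguesPoly L).coeff (L + L) = 1 := by
    rw [← two_mul, ← natDegree_rodriguesPoly]; exact monic_rodriguesPoly L
  rw [legendreP_eq, coeff_C_mul, coeff_iterate_derivative, hW, ← two_mul,
    Nat.descFactorial_eq_factorial_mul_choose, nsmul_eq_mul]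
  push_cast
  field_simp

theorem coeff_legendreP_self_pos (L : ℕ) : 0 < (legendreP L).coeff L := by
  rw [coeff_legendreP_self]
  have := Nat.choose_pos (show L ≤ 2 * L by omega)
  positivity

theorem natDegree_legendreP (L : ℕ) : (legendreP L).natDegree = L := by
  refine le_antisymm ?_ (le_natDegree_of_ne_zero (coeff_legendreP_self_pos L).ne')
  have := natDegree_iterate_derivative (rodriguesPoly L) L
  rw [natDegree_rodriguesPoly] at this
  rw [legendreP_eq]
  exact (natDegree_C_mul_le _ _).trans (by omega)

theorem iterate_derivative_rodriguesPoly_two_mul (L : ℕ) :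
    derivative^[2 * L] (rodriguesPoly L) = C ((2 * L).factorial : ℝ) := by
  have hdeg : (derivative^[2 * L] (rodriguesPoly L)).natDegree = 0 := by
    have := natDegree_iterate_derivative (rodriguesPoly L) (2 * L)
    rw [natDegree_rodriguesPoly] at this
    omega
  rw [eq_C_of_natDegree_eq_zero hdeg, coeff_iterate_derivative, zero_add,
    ← natDegree_rodriguesPoly, (monic_rodriguesPoly L).coeff_natDegree, natDegree_rodriguesPoly,
    Nat.descFactorial_self, nsmul_one]

theorem integral_legendreP_mul_legendreP_of_ne {L M : ℕ} (h : L ≠ M) :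
    ∫ t in (-1)..1, (legendreP L).eval t * (legendreP M).eval t = 0 := by
  rcases h.lt_or_gt with hlt | hgt
  · exact integral_eval_mul_legendreP_eq_zero (by rwa [natDegree_legendreP])
  · simp_rw [mul_comm ((legendreP L).eval _)]
    exact integral_eval_mul_legendreP_eq_zero (by rwa [natDegree_legendreP])

theorem integral_legendreP_mul_self (L : ℕ) :
    ∫ t in (-1)..1, (legendreP L).eval t * (legendreP L).eval t = 2 / (2 * L + 1) := by
  set c : ℝ := 1 / (2 ^ L * L.factorial)
  have hsq : ∀ t, (legendreP L).eval t * (legendreP L).eval t = c * c *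
      ((derivative^[L] (rodriguesPoly L)).eval t * (derivative^[L] (rodriguesPoly L)).eval t) := by
    intro t
    simp only [legendreP_eq, eval_mul, eval_C]
    ring
  simp_rw [hsq]
  rw [intervalIntegral.integral_const_mul, integral_iterate_derivative_rodriguesPoly_mul L _ le_rfl,
    Nat.sub_self, Function.iterate_zero_apply, ← Function.iterate_add_apply, ← two_mul,
    iterate_derivative_rodriguesPoly_two_mul]
  simp only [eval_C]
  rw [intervalIntegral.integral_mul_const, integral_eval_rodriguesPoly, Nat.factorial_succ (2 * L)]
  simp only [c]
  push_cast
  field_simp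
  rw [← pow_mul, mul_comm L 2, pow_mul, neg_one_sq, one_pow]
  ring

theorem exists_eq_sum_legendreP {n : ℕ} {p : ℝ[X]} (hp : p.natDegree ≤ n) :
    ∃ c : ℕ → ℝ, p = ∑ L ∈ Finset.range (n + 1), C (c L) * legendreP L := by
  induction n generalizing p with
  | zero =>
    refine ⟨fun _ => p.coeff 0, ?_⟩
    simpa [legendreP] using eq_C_of_natDegree_le_zero hp
  | succ n ih =>
    set a := p.coeff (n + 1) / (legendreP (n + 1)).coeff (n + 1)
    have hlead := (coeff_legendreP_self_pos (n + 1)).ne'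
    have hq : (p - C a * legendreP (n + 1)).natDegree ≤ n := by
      rw [natDegree_le_iff_coeff_eq_zero]
      intro m hm
      rcases (Nat.succ_le_of_lt hm).eq_or_lt with rfl | hlt
      · simp [a, hlead]
      · rw [coeff_sub, coeff_C_mul, coeff_eq_zero_of_natDegree_lt (by omega),
          coeff_eq_zero_of_natDegree_lt (by rw [natDegree_legendreP]; omega), mul_zero, sub_zero]
    obtain ⟨c, hc⟩ := ih hq
    refine ⟨Function.update c (n + 1) a, ?_⟩
    rw [Finset.sum_range_succ, Function.update_self, ← sub_eq_iff_eq_add, hc]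
    refine Finset.sum_congr rfl fun L hL => ?_
    rw [Function.update_of_ne (by simp at hL; omega)]

noncomputable def legendreCoeff (f : ℝ → ℝ) (L : ℕ) : ℝ :=
  (2 * L + 1) / 2 * ∫ t in (-1)..1, f t * (legendreP L).eval t

theorem legendreCoeff_eval_eq_zero {p : ℝ[X]} {L : ℕ} (hp : p.natDegree < L) :
    legendreCoeff p.eval L = 0 := by
  rw [legendreCoeff, integral_eval_mul_legendreP_eq_zero hp, mul_zero]

theorem legendreCoeff_sum_C_mul_legendreP (c : ℕ → ℝ) {n M : ℕ} (hM : M ≤ n) :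
    legendreCoeff (∑ L ∈ Finset.range (n + 1), C (c L) * legendreP L).eval M = c M := by
  have hint : ∀ L, IntervalIntegrable
      (fun t => c L * ((legendreP L).eval t * (legendreP M).eval t)) volume (-1) 1 :=
    fun L => (intervalIntegrable_eval_mul_eval _ _ _ _).const_mul _
  simp only [legendreCoeff, eval_finsetSum, eval_mul, eval_C, Finset.sum_mul, mul_assoc]
  rw [intervalIntegral.integral_finsetSum fun L _ => hint L,
    Finset.sum_eq_single M (fun L _ hLM => by
        rw [intervalIntegral.integral_const_mul, integral_legendreP_mul_legendreP_of_ne hLM,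
          mul_zero])
      (fun h => absurd (Finset.mem_range.mpr (by omega)) h),
    intervalIntegral.integral_const_mul, integral_legendreP_mul_self]
  field_simp

theorem hasSum_legendreCoeff_mul_eval (p : ℝ[X]) (x : ℝ) :
    HasSum (fun L => legendreCoeff p.eval L * (legendreP L).eval x) (p.eval x) := by
  obtain ⟨c, hc⟩ := exists_eq_sum_legendreP (le_refl p.natDegree)
  have hfin : ∀ L ∉ Finset.range (p.natDegree + 1),
      legendreCoeff p.eval L * (legendreP L).eval x = 0 := fun L hL => by
    rw [legendreCoeff_eval_eq_zero (by simp at hL; omega), zero_mul]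
  convert hasSum_sum_of_ne_finset_zero (L := SummationFilter.unconditional ℕ) hfin using 1
  conv_lhs => rw [hc]
  rw [eval_finsetSum]
  refine Finset.sum_congr rfl fun L hL => ?_
  rw [hc, legendreCoeff_sum_C_mul_legendreP c (by simpa [Nat.lt_succ_iff] using hL), eval_mul,
    eval_C]

theorem legendreCoeff_pow_eq_zero {n L : ℕ} (h : n < L) : legendreCoeff (· ^ n) L = 0 := by
  simpa using legendreCoeff_eval_eq_zero (p := X ^ n) (by simpa using h)

theorem hasSum_legendreCoeff_pow_mul_eval (n : ℕ) (x : ℝ) :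
    HasSum (fun L => legendreCoeff (· ^ n) L * (legendreP L).eval x) (x ^ n) := by
  simpa using hasSum_legendreCoeff_mul_eval (X ^ n) x

theorem abs_coeff_rodriguesPoly_le (L j : ℕ) : |(rodriguesPoly L).coeff j| ≤ 2 ^ L := by
  have hW : rodriguesPoly L = expand ℝ 2 ((X + C (-1)) ^ L) := by
    simp [rodriguesPoly, sub_eq_add_neg]
  rw [hW, coeff_expand two_pos]
  split_ifs
  · rw [coeff_X_add_C_pow, abs_mul, abs_pow, abs_neg, abs_one, one_pow, one_mul, Nat.abs_cast]
    exact_mod_cast Nat.choose_le_two_pow L _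
  · simp

theorem abs_coeff_legendreP_le {L i : ℕ} (hi : i ≤ L) : |(legendreP L).coeff i| ≤ 4 ^ L := by
  have hchoose : ((i + L).choose L : ℝ) ≤ 4 ^ L := by
    have : (i + L).choose L ≤ 2 ^ (2 * L) :=
      (Nat.choose_le_two_pow _ _).trans (Nat.pow_le_pow_right two_pos (by omega))
    exact_mod_cast this.trans_eq (by rw [pow_mul]; norm_num)
  rw [legendreP_eq, coeff_C_mul, coeff_iterate_derivative, nsmul_eq_mul, abs_mul, abs_mul,
    Nat.abs_cast, Nat.descFactorial_eq_factorial_mul_choose, abs_of_pos (by positivity)]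
  calc 1 / (2 ^ L * L.factorial) * (↑(L.factorial * (i + L).choose L)
        * |(rodriguesPoly L).coeff (i + L)|)
      = (i + L).choose L * |(rodriguesPoly L).coeff (i + L)| / 2 ^ L := by
        push_cast
        field_simp
    _ ≤ 4 ^ L * 2 ^ L / 2 ^ L := by
        gcongr
        exact abs_coeff_rodriguesPoly_le L (i + L)
    _ = 4 ^ L := by field_simp

theorem abs_eval_legendreP_le (L : ℕ) {x : ℝ} (hx : |x| ≤ 1) : |(legendreP L).eval x| ≤ 8 ^ L := by
  rw [eval_eq_sum_range, natDegree_legendreP]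
  calc |∑ i ∈ Finset.range (L + 1), (legendreP L).coeff i * x ^ i|
      ≤ ∑ i ∈ Finset.range (L + 1), (4 : ℝ) ^ L := by
        refine (Finset.abs_sum_le_sum_abs _ _).trans (Finset.sum_le_sum fun i hi => ?_)
        rw [abs_mul, abs_pow]
        exact (mul_le_of_le_one_right (abs_nonneg _) (pow_le_one₀ (abs_nonneg x) hx)).trans
          (abs_coeff_legendreP_le (by simp at hi; omega))
    _ = (L + 1) * 4 ^ L := by simp
    _ ≤ 2 ^ L * 4 ^ L := by
        gcongr
        exact_mod_cast Nat.lt_two_pow_self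
    _ = 8 ^ L := by rw [← mul_pow]; norm_num

theorem abs_legendreCoeff_le {f : ℝ → ℝ} {B : ℝ} (hf : ∀ t ∈ Set.Icc (-1 : ℝ) 1, |f t| ≤ B)
    (L : ℕ) : |legendreCoeff f L| ≤ (2 * L + 1) * 8 ^ L * B := by
  have hB : 0 ≤ B := (abs_nonneg _).trans (hf 0 (by norm_num))
  have hint : ‖∫ t in (-1)..1, f t * (legendreP L).eval t‖ ≤ B * 8 ^ L * |1 - (-1 : ℝ)| := by
    refine intervalIntegral.norm_integral_le_of_norm_le_const fun t ht => ?_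
    rw [Set.uIoc_of_le (by norm_num)] at ht
    rw [Real.norm_eq_abs, abs_mul]
    exact mul_le_mul (hf t (Set.Ioc_subset_Icc_self ht))
      (abs_eval_legendreP_le L (abs_le.mpr ⟨ht.1.le, ht.2⟩)) (abs_nonneg _) hB
  rw [legendreCoeff, abs_mul, abs_of_pos (by positivity)]
  calc (2 * L + 1) / 2 * |∫ t in (-1)..1, f t * (legendreP L).eval t|
      ≤ (2 * L + 1) / 2 * (B * 8 ^ L * |1 - (-1 : ℝ)|) := by gcongr; exact hint
    _ = (2 * L + 1) * 8 ^ L * B := by norm_num; ring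

theorem abs_legendreCoeff_pow_mul_eval_le (n L : ℕ) {x : ℝ} (hx : |x| ≤ 1) :
    |legendreCoeff (· ^ n) L * (legendreP L).eval x| ≤ 192 ^ L := by
  have hpow : ∀ t ∈ Set.Icc (-1 : ℝ) 1, |t ^ n| ≤ 1 := fun t ht => by
    rw [abs_pow]; exact pow_le_one₀ (abs_nonneg t) (abs_le.mpr ht)
  have hbernoulli : (2 * L + 1 : ℝ) ≤ 3 ^ L := by
    have := one_add_le_pow_of_two_add_nonneg (by norm_num : (0 : ℝ) ≤ 2 + 2) L
    norm_num at this
    linarith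
  rw [abs_mul]
  calc |legendreCoeff (· ^ n) L| * |(legendreP L).eval x|
      ≤ (2 * L + 1) * 8 ^ L * 1 * 8 ^ L :=
        mul_le_mul (abs_legendreCoeff_le hpow L) (abs_eval_legendreP_le L hx) (abs_nonneg _)
          (by positivity)
    _ ≤ 3 ^ L * 8 ^ L * 1 * 8 ^ L := by gcongr
    _ = 192 ^ L := by rw [mul_one, ← mul_pow, ← mul_pow]; norm_num

section Bessel

open Nat

noncomputable def besselITerm (N : ℕ) (y : ℝ) (m : ℕ) : ℝ :=
  (y / 2) ^ (2 * m + N) / (m ! * (m + N)!)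

variable (N : ℕ)

theorem besselITerm_mul (k x : ℝ) (m : ℕ) :
    besselITerm N (k * x) m = besselITerm N k m * x ^ (2 * m + N) := by
  simp only [besselITerm, mul_div_right_comm k x 2, mul_pow]
  ring

theorem abs_besselITerm_mul_pow (k R : ℝ) (m : ℕ) :
    |besselITerm N k m| * R ^ (2 * m + N) = besselITerm N (|k| * R) m := by
  rw [besselITerm_mul, besselITerm, besselITerm, abs_div, abs_pow, abs_div, abs_two,
    abs_of_pos (by positivity : (0 : ℝ) < m ! * (m + N)!)]

theorem summable_besselITerm (y : ℝ) : Summable (besselITerm N y) := by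
  refine .of_norm_bounded ((Real.summable_pow_div_factorial ((y / 2) ^ 2)).mul_left
    (|y / 2| ^ N)) fun m => ?_
  rw [besselITerm, Real.norm_eq_abs, abs_div, abs_pow, pow_add, pow_mul, ← abs_pow,
    abs_of_pos (by positivity : (0 : ℝ) < m ! * (m + N)!), abs_of_nonneg (by positivity)]
  have : (m ! : ℝ) ≤ m ! * (m + N)! := le_mul_of_one_le_right (by positivity)
    (by exact_mod_cast (m + N).factorial_pos)
  calc ((y / 2) ^ 2) ^ m * |y / 2| ^ N / (m ! * (m + N)!)
      ≤ ((y / 2) ^ 2) ^ m * |y / 2| ^ N / m ! := by gcongr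
    _ = |y / 2| ^ N * (((y / 2) ^ 2) ^ m / m !) := by ring

theorem hasSum_besselITerm (y : ℝ) : HasSum (besselITerm N y) (besselI N y) :=
  (summable_besselITerm N y).hasSum

end Bessel

theorem hasSum_fourierLegendreCoeffI (L N : ℕ) (k : ℝ) :
    HasSum (fun m => besselITerm N k m * legendreCoeff (· ^ (2 * m + N)) L)
      (fourierLegendreCoeffI L N k) := by
  have hterm : HasSum
      (fun m => ∫ t in (-1)..1, besselITerm N k m * (t ^ (2 * m + N) * (legendreP L).eval t))
      (∫ t in (-1)..1, besselI N (k * t) * (legendreP L).eval t) := by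
    refine intervalIntegral.hasSum_integral_of_dominated_convergence
      (fun m _ => |besselITerm N k m| * 8 ^ L) (fun m => by fun_prop) (fun m => ?_)
      (.of_forall fun _ _ => (summable_besselITerm N k).abs.mul_right _) intervalIntegrable_const
      (.of_forall fun t _ => ?_)
    · refine .of_forall fun t ht => ?_
      rw [Set.uIoc_of_le (by norm_num)] at ht
      have ht' : |t| ≤ 1 := abs_le.mpr ⟨ht.1.le, ht.2⟩
      rw [Real.norm_eq_abs, abs_mul, abs_mul, abs_pow]
      gcongr
      exact (mul_le_of_le_one_left (abs_nonneg _) (pow_le_one₀ (abs_nonneg t) ht')).trans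
        (abs_eval_legendreP_le L ht')
    · simpa only [besselITerm_mul, mul_assoc] using (hasSum_besselITerm N (k * t)).mul_right _
  have hcoeff : ∀ m, (2 * L + 1 : ℝ) / 2 *
      ∫ t in (-1)..1, besselITerm N k m * (t ^ (2 * m + N) * (legendreP L).eval t)
        = besselITerm N k m * legendreCoeff (· ^ (2 * m + N)) L := fun m => by
    rw [intervalIntegral.integral_const_mul, legendreCoeff]
    ring
  have hscaled := hterm.mul_left ((2 * L + 1 : ℝ) / 2)
  simp only [hcoeff] at hscaled
  exact hscaled

theorem summable_besselITerm_mul_legendreCoeff_mul_eval (N : ℕ) (k : ℝ) {x : ℝ} (hx : |x| ≤ 1) :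
    Summable fun p : ℕ × ℕ =>
      besselITerm N k p.1 * legendreCoeff (· ^ (2 * p.1 + N)) p.2 * (legendreP p.2).eval x := by
  refine .of_norm_bounded ((summable_besselITerm N (|k| * 384)).mul_of_nonneg
    (summable_geometric_two) (fun m => ?_) (fun _ => by positivity)) fun ⟨m, L⟩ => ?_
  · rw [← abs_besselITerm_mul_pow]; positivity
  dsimp only
  rw [← abs_besselITerm_mul_pow, Real.norm_eq_abs, mul_assoc, abs_mul, mul_assoc]
  gcongr
  rcases le_or_gt L (2 * m + N) with hL | hL
  · calc |legendreCoeff (· ^ (2 * m + N)) L * (legendreP L).eval x|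
        ≤ 192 ^ L := abs_legendreCoeff_pow_mul_eval_le _ L hx
      _ = 384 ^ L * (1 / 2) ^ L := by rw [← mul_pow]; norm_num
      _ ≤ 384 ^ (2 * m + N) * (1 / 2) ^ L := by gcongr; norm_num
  · rw [legendreCoeff_pow_eq_zero hL, zero_mul, abs_zero]
    positivity

/-- The Fourier–Legendre series of `I_N(k·)` converges pointwise on `[-1, 1]`
to the function value: `∑_{L=0}^∞ b_{LN}(k) P_L(x) = I_N(kx)`. -/
theorem fourierLegendre_series_besselI (N : ℕ) (k x : ℝ)
    (hx₁ : -1 ≤ x) (hx₂ : x ≤ 1) :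
    HasSum (fun L : ℕ => fourierLegendreCoeffI L N k * (legendreP L).eval x)
      (besselI N (k * x)) := by
  have hx : |x| ≤ 1 := abs_le.mpr ⟨hx₁, hx₂⟩
  refine (summable_besselITerm_mul_legendreCoeff_mul_eval N k hx).hasSum_prod_fiberwise_comm
    (hasSum_besselITerm N (k * x)) (fun m => ?_)
    (fun L => (hasSum_fourierLegendreCoeffI L N k).mul_right _)
  simpa only [besselITerm_mul, mul_assoc] using
    (hasSum_legendreCoeff_pow_mul_eval (2 * m + N) x).mul_left (besselITerm N k m)
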